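/- With the notation of the lowest two-sided cell: c_min^L = { x w y : w ∈ 𝒲, ℓ(xwy)=ℓ(x)+ℓ(w)+ℓ(y), L(w)=ν_L } equals { x w y : w ∈ 𝒲, (x,w,y) ∈ ℒ_L(W), L(w)=ν_L }, i.e., requiring only L-additivity of the triple (x,w,y) instead of length-additivity defines the same set. -/

import Mathlib

/-!
`⊆` holds because `L` is additive along length-additive products. For `⊇`, write `x`, `w`, `y` as
reduced words `a`, `b`, `c`, with the letters of `b` in `I`. By the subword property, `a ++ b ++ c`
contains a reduced subword `d₁ ++ d₂ ++ d₃` with the same product, each `dₖ` a subword of the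
corresponding factor. On reduced words `L` is the sum of the weights of the letters, which are
nonnegative, so `L (π dₖ)` is at most the weight of the `k`-th factor; `L`-additivity of `(x, w, y)`
forces equality, so `L (π d₂) = L w = ν`, and `π d₂ ∈ W_I`.

The subword property follows from the deletion condition, proved with Tits' reflection cocycle:
`sᵢ ↦ ((t, ε) ↦ (sᵢ t sᵢ, ε + [t = sᵢ]))` satisfies the Coxeter relations, hence defines an action
of `W` on `W × ZMod 2` whose second coordinate detects the reflections occurring in the right
inversion sequence of a word.
-/

namespace Stmt4

variable {B W Γ : Type*} [Group W] [AddCommGroup Γ] [LinearOrder Γ] [IsOrderedAddMonoid Γ]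
variable {M : CoxeterMatrix B} (cs : CoxeterSystem M W)

/-- The standard parabolic subgroup `W_I`. -/
def par (I : Set B) : Subgroup W := Subgroup.closure (cs.simple '' I)

/-- `w` is a longest element of `W_I`. -/
def IsLongest (I : Set B) (w : W) : Prop :=
  w ∈ par cs I ∧ ∀ v ∈ par cs I, cs.length v ≤ cs.length w

/-- The Coxeter graph of a Coxeter matrix: vertices are the simple reflections,
with an edge between `i ≠ j` whenever `M i j ≠ 2`. -/
def coxeterGraph (M : CoxeterMatrix B) : SimpleGraph B where
  Adj i j := i ≠ j ∧ M i j ≠ 2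
  symm := by
    constructor
    intro i j ⟨h1, h2⟩
    exact ⟨h1.symm, by rwa [M.symmetric j i]⟩
  loopless := by constructor; intro i ⟨h1, _⟩; exact h1 rfl

open CoxeterSystem

local prefix:100 "σ" => cs.simple
local prefix:100 "π" => cs.wordProd
local prefix:100 "ℓ" => cs.length

theorem Finset.sum_range_two_mul {G : Type*} [AddCommMonoid G] (f : ℕ → G) (n : ℕ) :
    ∑ v ∈ Finset.range (2 * n), f v = ∑ u ∈ Finset.range n, (f (2 * u) + f (2 * u + 1)) := by
  induction n with
  | zero => simp
  | succ n ih =>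
    rw [Finset.sum_range_succ, ← ih, Nat.mul_succ, Finset.sum_range_succ, Finset.sum_range_succ,
      add_assoc]

theorem Equiv.Perm.pow_apply_of_apply_eq_conj {p : W} {g : W → ZMod 2}
    {φ : Equiv.Perm (W × ZMod 2)} (hφ : ∀ t ε, φ (t, ε) = (p * t * p⁻¹, ε + g t))
    (k : ℕ) (t : W) (ε : ZMod 2) :
    (φ ^ k) (t, ε) =
      (p ^ k * t * (p ^ k)⁻¹, ε + ∑ u ∈ Finset.range k, g (p ^ u * t * (p ^ u)⁻¹)) := by
  induction k generalizing t ε with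
  | zero => simp
  | succ k ih =>
    rw [pow_succ, Equiv.Perm.mul_apply, hφ, ih, Finset.sum_range_succ']
    simp only [pow_succ, pow_zero, one_mul, inv_one, mul_one, mul_inv_rev, mul_assoc]
    rw [add_assoc, add_comm (g t)]

open Classical in
noncomputable def simplePerm (i : B) : Equiv.Perm (W × ZMod 2) :=
  Function.Involutive.toPerm (fun p => (σ i * p.1 * σ i, p.2 + if p.1 = σ i then 1 else 0)) <| by
    rintro ⟨t, ε⟩
    have hconj : σ i * t * σ i = σ i ↔ t = σ i := by
      constructor
      · intro h
        simpa [mul_assoc, cs.simple_mul_simple_cancel_left] using congrArg (σ i * · * σ i) h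
      · rintro rfl
        simp [cs.simple_mul_simple_self]
    have hself : ∀ x : ZMod 2, x + x = 0 := by decide
    dsimp only
    rw [hconj, add_assoc, hself, add_zero]
    simp only [mul_assoc, cs.simple_mul_simple_cancel_left, cs.simple_mul_simple_self, mul_one]

open Classical in
theorem simplePerm_apply (i : B) (t : W) (ε : ZMod 2) :
    simplePerm cs i (t, ε) = (σ i * t * σ i, ε + if t = σ i then 1 else 0) :=
  rfl

open Classical in
theorem simplePerm_mul_simplePerm_apply (i j : B) (t : W) (ε : ZMod 2) :
    (simplePerm cs i * simplePerm cs j) (t, ε) =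
      (σ i * σ j * t * (σ i * σ j)⁻¹,
        ε + ((if σ j * t = 1 then 1 else 0) + if σ j * t = σ i * σ j then 1 else 0)) := by
  have h₁ : t = σ j ↔ σ j * t = 1 := by
    rw [← cs.simple_mul_simple_self j, mul_right_inj]
  have h₂ : σ j * t * σ j = σ i ↔ σ j * t = σ i * σ j := by
    rw [← mul_left_inj (σ j), cs.simple_mul_simple_cancel_right]
  rw [Equiv.Perm.mul_apply, simplePerm_apply, simplePerm_apply, h₁, h₂, mul_inv_rev,
    cs.inv_simple, cs.inv_simple, add_assoc]
  simp only [mul_assoc]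

theorem simple_mul_conj_pow_eq_pow_iff (i j : B) (t : W) (u k : ℕ) :
    σ j * ((σ i * σ j) ^ u * t * ((σ i * σ j) ^ u)⁻¹) = (σ i * σ j) ^ k ↔
      σ j * t = (σ i * σ j) ^ (2 * u + k) := by
  have hconj : σ j * (σ i * σ j) * (σ j)⁻¹ = (σ i * σ j)⁻¹ := by
    rw [mul_inv_rev, cs.inv_simple, cs.inv_simple]
    simp only [mul_assoc, cs.simple_mul_simple_self, mul_one]
  have hflip : σ j * (σ i * σ j) ^ u = ((σ i * σ j) ^ u)⁻¹ * σ j := by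
    rw [← inv_pow, ← hconj, conj_pow, inv_mul_cancel_right]
  rw [← mul_assoc, ← mul_assoc, hflip, mul_assoc _ (σ j), mul_assoc, inv_mul_eq_iff_eq_mul,
    mul_inv_eq_iff_eq_mul, ← pow_add, ← pow_add]
  ring_nf

open Classical in
theorem isLiftable_simplePerm : M.IsLiftable (simplePerm cs) := by
  intro i j
  ext ⟨t, ε⟩ : 1
  rw [Equiv.Perm.pow_apply_of_apply_eq_conj (simplePerm_mul_simplePerm_apply cs i j)]
  -- The sign moves by the number of `v < 2 * M i j` with `σ j * t = (σ i * σ j) ^ v`,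
  -- which is even because `(σ i * σ j) ^ M i j = 1`.
  have hsplit : ∀ u : ℕ,
      ((if σ j * ((σ i * σ j) ^ u * t * ((σ i * σ j) ^ u)⁻¹) = 1 then (1 : ZMod 2) else 0) +
        if σ j * ((σ i * σ j) ^ u * t * ((σ i * σ j) ^ u)⁻¹) = σ i * σ j then 1 else 0) =
      (if σ j * t = (σ i * σ j) ^ (2 * u) then 1 else 0) +
        if σ j * t = (σ i * σ j) ^ (2 * u + 1) then 1 else 0 := fun u => by
    have h₀ := simple_mul_conj_pow_eq_pow_iff cs i j t u 0
    have h₁ := simple_mul_conj_pow_eq_pow_iff cs i j t u 1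
    rw [pow_zero, add_zero] at h₀
    rw [pow_one] at h₁
    simp only [h₀, h₁]
  have hp : (σ i * σ j) ^ M i j = 1 := cs.simple_mul_simple_pow i j
  have hperiodic : ∀ v, (if σ j * t = (σ i * σ j) ^ (M i j + v) then (1 : ZMod 2) else 0) =
      if σ j * t = (σ i * σ j) ^ v then 1 else 0 := fun v => by
    rw [pow_add, hp, one_mul]
  simp only [hsplit, hp]
  rw [← Finset.sum_range_two_mul (fun v => if σ j * t = (σ i * σ j) ^ v then (1 : ZMod 2) else 0),
    two_mul, Finset.sum_range_add]
  simp only [hperiodic, one_mul, inv_one, mul_one, Equiv.Perm.one_apply, Prod.mk.injEq, true_and]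
  exact (by decide : ∀ x y : ZMod 2, x + (y + y) = x) _ _

noncomputable def permRep : W →* Equiv.Perm (W × ZMod 2) :=
  cs.lift ⟨simplePerm cs, isLiftable_simplePerm cs⟩

theorem permRep_simple (i : B) : permRep cs (σ i) = simplePerm cs i :=
  cs.lift_apply_simple (isLiftable_simplePerm cs) i

/-- `reflCocycle (π ω) t` is the parity of the number of occurrences of `t` in `rightInvSeq ω`. -/
noncomputable def reflCocycle (w t : W) : ZMod 2 := (permRep cs w (t, 0)).2

theorem permRep_apply (w t : W) (ε : ZMod 2) :
    permRep cs w (t, ε) = (w * t * w⁻¹, ε + reflCocycle cs w t) := by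
  induction w using cs.simple_induction_left generalizing t ε with
  | one => simp [reflCocycle]
  | mul_simple_left w i ih =>
    have hstep : ∀ ε, permRep cs (σ i * w) (t, ε) =
        simplePerm cs i (w * t * w⁻¹, ε + reflCocycle cs w t) := fun ε => by
      rw [map_mul, Equiv.Perm.mul_apply, ih, permRep_simple]
    unfold reflCocycle
    rw [hstep, hstep, simplePerm_apply, simplePerm_apply, mul_inv_rev, cs.inv_simple, zero_add,
      add_assoc]
    simp only [mul_assoc]

theorem reflCocycle_mul (a b t : W) :
    reflCocycle cs (a * b) t = reflCocycle cs b t + reflCocycle cs a (b * t * b⁻¹) := by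
  rw [reflCocycle, map_mul, Equiv.Perm.mul_apply, permRep_apply, permRep_apply, zero_add]

open Classical in
theorem reflCocycle_simple (i : B) (t : W) :
    reflCocycle cs (σ i) t = if t = σ i then 1 else 0 := by
  rw [reflCocycle, permRep_simple, simplePerm_apply, zero_add]

theorem reflCocycle_wordProd_eq_zero {ω : List B} {t : W} (ht : t ∉ cs.rightInvSeq ω) :
    reflCocycle cs (π ω) t = 0 := by
  induction ω with
  | nil => simp [reflCocycle]
  | cons i ω ih =>
    rw [rightInvSeq, List.mem_cons, not_or] at ht
    have hconj : π ω * t * (π ω)⁻¹ ≠ σ i := fun h => ht.1 (by rw [← h]; group)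
    rw [cs.wordProd_cons, reflCocycle_mul, ih ht.2, reflCocycle_simple, if_neg hconj, add_zero]

theorem simple_mem_rightInvSeq_of_length_mul_lt {ω : List B} {i : B}
    (h : ℓ (π ω * σ i) < ℓ (π ω)) : σ i ∈ cs.rightInvSeq ω := by
  by_contra hi
  obtain ⟨ω', hω', hprod⟩ := cs.exists_isReduced (π ω * σ i)
  have hcocycle : reflCocycle cs (π ω') (σ i) = 1 := by
    rw [← hprod, reflCocycle_mul, reflCocycle_simple, if_pos rfl, mul_inv_cancel_right,
      reflCocycle_wordProd_eq_zero cs hi, add_zero]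
  have hmem : σ i ∈ cs.rightInvSeq ω' := by
    by_contra hi'
    simp [reflCocycle_wordProd_eq_zero cs hi'] at hcocycle
  have hlt := (cs.isRightInversion_of_mem_rightInvSeq hω' hmem).2
  rw [← hprod, cs.simple_mul_simple_cancel_right] at hlt
  exact lt_asymm h hlt

theorem exists_wordProd_mul_simple_eq_eraseIdx {ω : List B} {i : B}
    (h : ℓ (π ω * σ i) < ℓ (π ω)) : ∃ n < ω.length, π ω * σ i = π (ω.eraseIdx n) := by
  obtain ⟨n, hn, hget⟩ :=
    List.mem_iff_getElem.mp (simple_mem_rightInvSeq_of_length_mul_lt cs h)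
  rw [cs.length_rightInvSeq] at hn
  refine ⟨n, hn, ?_⟩
  rw [← cs.wordProd_mul_getD_rightInvSeq, List.getD_eq_getElem _ _ (by simpa using hn), hget]

theorem exists_isReduced_sublist (ω : List B) :
    ∃ ω', ω'.Sublist ω ∧ cs.IsReduced ω' ∧ π ω' = π ω := by
  induction ω using List.reverseRecOn with
  | nil => exact ⟨[], List.Sublist.slnil, by simp [CoxeterSystem.IsReduced], rfl⟩
  | append_singleton ω i ih =>
    obtain ⟨ω', hsub, hred, hprod⟩ := ih
    have hprod' : π (ω ++ [i]) = π ω' * σ i := by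
      rw [cs.wordProd_append, hprod, cs.wordProd_singleton]
    have hprod'' : π (ω' ++ [i]) = π ω' * σ i := by
      rw [cs.wordProd_append, cs.wordProd_singleton]
    rcases cs.length_mul_simple (π ω') i with hlong | hshort
    · refine ⟨ω' ++ [i], hsub.append (List.Sublist.refl _), ?_, by rw [hprod', hprod'']⟩
      rw [CoxeterSystem.IsReduced, hprod'', hlong, hred, List.length_append,
        List.length_singleton]
    · obtain ⟨n, hn, herase⟩ := exists_wordProd_mul_simple_eq_eraseIdx cs
        (ω := ω') (i := i) (by omega)
      refine ⟨ω'.eraseIdx n, ((ω'.eraseIdx_sublist n).trans hsub).trans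
        (List.sublist_append_left _ _), ?_, by rw [hprod', herase]⟩
      have := List.length_eraseIdx_add_one hn
      rw [hred.eq] at hshort
      rw [CoxeterSystem.IsReduced, ← herase]
      omega

theorem isReduced_append_iff (ω ω' : List B) :
    cs.IsReduced (ω ++ ω') ↔
      cs.IsReduced ω ∧ cs.IsReduced ω' ∧ ℓ (π ω * π ω') = ℓ (π ω) + ℓ (π ω') := by
  have h₁ := cs.length_wordProd_le ω
  have h₂ := cs.length_wordProd_le ω'
  have h₃ := cs.length_mul_le (π ω) (π ω')
  simp only [CoxeterSystem.IsReduced, cs.wordProd_append, List.length_append]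
  omega

theorem mem_par_iff {I : Set B} {w : W} :
    w ∈ par cs I ↔ ∃ ω : List B, (∀ i ∈ ω, i ∈ I) ∧ π ω = w := by
  constructor
  · intro hw
    induction hw using Subgroup.closure_induction with
    | mem x hx =>
      obtain ⟨i, hi, rfl⟩ := hx
      exact ⟨[i], by simpa using hi, cs.wordProd_singleton i⟩
    | one => exact ⟨[], by simp, cs.wordProd_nil⟩
    | mul x y _ _ ihx ihy =>
      obtain ⟨ω, hω, rfl⟩ := ihx
      obtain ⟨ω', hω', rfl⟩ := ihy
      exact ⟨ω ++ ω', fun i hi => (List.mem_append.mp hi).elim (hω i) (hω' i),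
        cs.wordProd_append ω ω'⟩
    | inv x _ ih =>
      obtain ⟨ω, hω, rfl⟩ := ih
      exact ⟨ω.reverse, by simpa using hω, cs.wordProd_reverse ω⟩
  · rintro ⟨ω, hω, rfl⟩
    induction ω with
    | nil => exact one_mem _
    | cons i ω ih =>
      rw [List.forall_mem_cons] at hω
      exact mul_mem (Subgroup.subset_closure ⟨i, hω.1, rfl⟩) (ih hω.2)

theorem exists_isReduced_of_mem_par {I : Set B} {w : W} (hw : w ∈ par cs I) :
    ∃ ω : List B, (∀ i ∈ ω, i ∈ I) ∧ cs.IsReduced ω ∧ π ω = w := by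
  obtain ⟨ω, hω, rfl⟩ := (mem_par_iff cs).mp hw
  obtain ⟨ω', hsub, hred, hprod⟩ := exists_isReduced_sublist cs ω
  exact ⟨ω', fun i hi => hω i (hsub.subset hi), hred, hprod⟩

section Weight

variable {G : Type*}

def wordWeight [AddMonoid G] (L : W → G) (ω : List B) : G := (ω.map fun i => L (σ i)).sum

def IsWeightFunction [Add G] (L : W → G) : Prop :=
  ∀ u v : W, ℓ (u * v) = ℓ u + ℓ v → L (u * v) = L u + L v

variable {L : W → G}

theorem wordWeight_le_of_sublist [AddCommMonoid G] [PartialOrder G] [IsOrderedAddMonoid G]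
    (hnonneg : ∀ i, 0 ≤ L (σ i)) {ω ω' : List B} (h : ω.Sublist ω') :
    wordWeight cs L ω ≤ wordWeight cs L ω' :=
  (h.map _).sum_le_sum (by simpa using fun i _ => hnonneg i)

theorem apply_mul_mul_of_length_add [Add G] (hL : IsWeightFunction cs L) {x w y : W}
    (h : ℓ (x * w * y) = ℓ x + ℓ w + ℓ y) : L (x * w * y) = L x + L w + L y := by
  have h₁ := cs.length_mul_le x w
  have h₂ := cs.length_mul_le (x * w) y
  rw [hL _ _ (by omega : ℓ (x * w * y) = ℓ (x * w) + ℓ y),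
    hL _ _ (by omega : ℓ (x * w) = ℓ x + ℓ w)]

theorem apply_one_of_isWeightFunction [AddLeftCancelMonoid G] (hL : IsWeightFunction cs L) :
    L 1 = 0 := by
  have h := hL 1 1 (by simp)
  rwa [one_mul, left_eq_add] at h

theorem apply_wordProd_of_isReduced [AddLeftCancelMonoid G] (hL : IsWeightFunction cs L)
    {ω : List B} (hω : cs.IsReduced ω) : L (π ω) = wordWeight cs L ω := by
  induction ω with
  | nil => simp [wordWeight, apply_one_of_isWeightFunction cs hL]
  | cons i ω ih =>
    obtain ⟨-, hred, hlen⟩ := (isReduced_append_iff cs [i] ω).mp hω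
    rw [cs.wordProd_singleton] at hlen
    rw [cs.wordProd_cons, hL _ _ hlen, ih hred, wordWeight, wordWeight, List.map_cons,
      List.sum_cons]

theorem exists_length_add_of_apply_add [AddCancelCommMonoid G] [PartialOrder G]
    [IsOrderedCancelAddMonoid G] (hL : IsWeightFunction cs L) (hnonneg : ∀ i, 0 ≤ L (σ i))
    {a b c : List B}
    (ha : cs.IsReduced a) (hb : cs.IsReduced b) (hc : cs.IsReduced c)
    (hadd : L (π a * π b * π c) = L (π a) + L (π b) + L (π c)) :
    ∃ d₁ d₂ d₃ : List B, d₂.Sublist b ∧ π d₁ * π d₂ * π d₃ = π a * π b * π c ∧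
      ℓ (π d₁ * π d₂ * π d₃) = ℓ (π d₁) + ℓ (π d₂) + ℓ (π d₃) ∧ L (π d₂) = L (π b) := by
  obtain ⟨d, hsub, hred, hprod⟩ := exists_isReduced_sublist cs (a ++ b ++ c)
  obtain ⟨d₁₂, d₃, rfl, hsub₁₂, hsub₃⟩ := List.sublist_append_iff.mp hsub
  obtain ⟨d₁, d₂, rfl, hsub₁, hsub₂⟩ := List.sublist_append_iff.mp hsub₁₂
  obtain ⟨hred₁₂, hred₃, hlen₁₂₃⟩ := (isReduced_append_iff cs _ _).mp hred
  obtain ⟨hred₁, hred₂, hlen₁₂⟩ := (isReduced_append_iff cs _ _).mp hred₁₂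
  simp only [cs.wordProd_append] at hprod hlen₁₂₃
  have hweight : wordWeight cs L d₁ + wordWeight cs L d₂ + wordWeight cs L d₃ =
      wordWeight cs L a + wordWeight cs L b + wordWeight cs L c := by
    rw [← apply_wordProd_of_isReduced cs hL hred₁, ← apply_wordProd_of_isReduced cs hL hred₂,
      ← apply_wordProd_of_isReduced cs hL hred₃, ← apply_wordProd_of_isReduced cs hL ha,
      ← apply_wordProd_of_isReduced cs hL hb, ← apply_wordProd_of_isReduced cs hL hc,
      ← hL _ _ hlen₁₂, ← hL _ _ hlen₁₂₃, hprod, hadd]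
  have hle₁ := wordWeight_le_of_sublist cs hnonneg hsub₁
  have hle₂ := wordWeight_le_of_sublist cs hnonneg hsub₂
  have hle₃ := wordWeight_le_of_sublist cs hnonneg hsub₃
  obtain ⟨h₁₂, -⟩ := (add_eq_add_iff_eq_and_eq (add_le_add hle₁ hle₂) hle₃).mp hweight
  obtain ⟨-, h₂⟩ := (add_eq_add_iff_eq_and_eq hle₁ hle₂).mp h₁₂
  refine ⟨d₁, d₂, d₃, hsub₂, hprod, by rw [hlen₁₂₃, hlen₁₂], ?_⟩
  rw [apply_wordProd_of_isReduced cs hL hred₂, apply_wordProd_of_isReduced cs hL hb, h₂]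

end Weight

theorem stmt4
    (L : W → Γ) (ν : Γ)
    (hweight : ∀ u v : W, cs.length (u * v) = cs.length u + cs.length v →
      L (u * v) = L u + L v)
    (hnonneg : ∀ i : B, 0 ≤ L (cs.simple i)) :
    {z : W | ∃ x w y : W, (∃ I : Set B, I ≠ Set.univ ∧ w ∈ par cs I) ∧ L w = ν ∧
        z = x * w * y ∧
        cs.length (x * w * y) = cs.length x + cs.length w + cs.length y} =
    {z : W | ∃ x w y : W, (∃ I : Set B, I ≠ Set.univ ∧ w ∈ par cs I) ∧ L w = ν ∧
        z = x * w * y ∧ L (x * w * y) = L x + L w + L y} := by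
  ext z
  constructor
  · rintro ⟨x, w, y, hw, hν, rfl, hlen⟩
    exact ⟨x, w, y, hw, hν, rfl, apply_mul_mul_of_length_add cs hweight hlen⟩
  · rintro ⟨x, w, y, ⟨I, hI, hwI⟩, hν, rfl, hadd⟩
    obtain ⟨a, ha, rfl⟩ := cs.exists_isReduced x
    obtain ⟨c, hc, rfl⟩ := cs.exists_isReduced y
    obtain ⟨b, hbI, hb, rfl⟩ := exists_isReduced_of_mem_par cs hwI
    obtain ⟨d₁, d₂, d₃, hsub, hprod, hlen, hd₂⟩ :=
      exists_length_add_of_apply_add cs hweight hnonneg ha hb hc hadd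
    have hd₂I : π d₂ ∈ par cs I :=
      (mem_par_iff cs).mpr ⟨d₂, fun i hi => hbI i (hsub.subset hi), rfl⟩
    exact ⟨π d₁, π d₂, π d₃, ⟨I, hI, hd₂I⟩, hd₂.trans hν, hprod.symm, hlen⟩

end Stmt4
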